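/- Abstract form of Theorem 3 (quantization of the volume form bracket): fix n ≥ 1. Suppose for smooth functions f on a compact manifold M we have operators T_f^{(k)} on finite-dimensional Hilbert spaces with f ↦ T_f^{(k)} linear, satisfying (i) ‖ik[T_f^{(k)},T_g^{(k)}] − T_{{f,g}}^{(k)}‖ = O(1/k), (ii) ‖T_f^{(k)}‖ ≤ |f|_∞, (iii) ‖T_{f₁}^{(k)}⋯T_{f_p}^{(k)} − T_{f₁⋯f_p}^{(k)}‖ = O(1/k), where {·,·} is an antisymmetric biderivation. Define the order-2n bracket {f₁,...,f_{2n}} := (1/(2ⁿ n!)) Σ_{σ∈S_{2n}} sign(σ) ∏_{j=1}^n {f_{σ(2j−1)}, f_{σ(2j)}}. Then ‖((ik)ⁿ/n!)[T_{f₁}^{(k)},...,T_{f_{2n}}^{(k)}] − T_{{f₁,...,f_{2n}}}^{(k)}‖ = O(1/k) as k→∞. -/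

import Mathlib

/-!
With `⁅a, b⁆ = ab - ba`, one has `2ⁿ [A₁,…,A_{2n}] = ∑_σ sign σ ∏_j ⁅A_{σ(2j-1)}, A_{σ(2j)}⁆`:
expanding the `j`-th commutator gives the `σ`-term minus the `σ ∘ (2j-1 2j)`-term, and reindexing
the latter doubles the sum. Hence `((ik)ⁿ/n!) [T_{f₁},…,T_{f_{2n}}] - T_{{f₁,…,f_{2n}}}` is
`1/(2ⁿ n!)` times a signed sum of differences `∏_j ik⁅T_a, T_b⁆ - T_{∏_j {a,b}}`. Each of these is
`O(1/k)`: by (i) the factors may be replaced by `T_{{a,b}}` at a cost `O(1/k)`, (ii) keeps all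
factors bounded, and (iii) turns the product of the `T_{{a,b}}` into `T_{∏ {a,b}}`.
-/

open Filter Asymptotics

/-- The Nambu generalized commutator. -/
noncomputable def nambu {R : Type*} [Ring R] {n : ℕ} (A : Fin n → R) : R :=
  ∑ σ : Equiv.Perm (Fin n), (Equiv.Perm.sign σ : ℤ) • (List.ofFn fun i => A (σ i)).prod

open Equiv Function

theorem Equiv.Perm.sum_sign_smul_mul_swap {α M : Type*} [DecidableEq α] [Fintype α]
    [AddCommGroup M] (φ : Perm α → M) {a b : α} (hab : a ≠ b) :
    ∑ σ : Perm α, (Perm.sign σ : ℤ) • φ (σ * swap a b) = -∑ σ : Perm α, (Perm.sign σ : ℤ) • φ σ := by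
  rw [← Finset.sum_neg_distrib]
  refine Fintype.sum_equiv (Equiv.mulRight (swap a b)) _ _ fun σ => ?_
  simp [Perm.sign_mul, Perm.sign_swap hab]

-- 0-indexed: the paper's `σ(2j-1), σ(2j)` are `σ j.pairFst, σ j.pairSnd`.
def Fin.pairFst {n : ℕ} (j : Fin n) : Fin (2 * n) := ⟨2 * j, by omega⟩

def Fin.pairSnd {n : ℕ} (j : Fin n) : Fin (2 * n) := ⟨2 * j + 1, by omega⟩

lemma Fin.pairFst_ne_pairSnd {n : ℕ} (j : Fin n) : j.pairFst ≠ j.pairSnd := by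
  simp [Fin.pairFst, Fin.pairSnd, Fin.ext_iff]

section PairFactors

variable {R : Type*} [Ring R] {n : ℕ}

lemma list_prod_ofFn_eq_prod_pairs (x : Fin (2 * n) → R) :
    (List.ofFn x).prod = (List.ofFn fun j : Fin n => x j.pairFst * x j.pairSnd).prod := by
  rw [List.ofFn_mul', List.prod_flatten, List.map_ofFn]
  congr 2
  ext j
  simp [List.ofFn_succ, Fin.pairFst, Fin.pairSnd]

def pairFactors (x : Fin (2 * n) → R) (m : ℕ) (j : Fin n) : R :=
  if (j : ℕ) < m then ⁅x j.pairFst, x j.pairSnd⁆ else x j.pairFst * x j.pairSnd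

lemma pairFactors_zero (x : Fin (2 * n) → R) :
    pairFactors x 0 = fun j => x j.pairFst * x j.pairSnd := by
  ext j
  simp [pairFactors]

lemma pairFactors_self (x : Fin (2 * n) → R) :
    pairFactors x n = fun j => ⁅x j.pairFst, x j.pairSnd⁆ := by
  ext j
  simp [pairFactors]

lemma prod_pairFactors_succ (x : Fin (2 * n) → R) (j : Fin n) :
    (List.ofFn (pairFactors x (j + 1))).prod =
      (List.ofFn (pairFactors x j)).prod -
        (List.ofFn (pairFactors (x ∘ swap j.pairFst j.pairSnd) j)).prod := by
  have hcomm : pairFactors x (j + 1) =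
      update (pairFactors x j) j (x j.pairFst * x j.pairSnd - x j.pairSnd * x j.pairFst) := by
    ext i
    rcases eq_or_ne i j with rfl | hij
    · simp [pairFactors, Ring.lie_def]
    · have : (i : ℕ) < j + 1 ↔ (i : ℕ) < j := by
        have := Fin.val_ne_of_ne hij
        omega
      simp only [pairFactors, update_of_ne hij, this]
  have hswap : pairFactors (x ∘ swap j.pairFst j.pairSnd) j =
      update (pairFactors x j) j (x j.pairSnd * x j.pairFst) := by
    ext i
    rcases eq_or_ne i j with rfl | hij
    · simp [pairFactors, swap_apply_left, swap_apply_right]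
    · have hfst : swap j.pairFst j.pairSnd i.pairFst = i.pairFst := by
        apply swap_apply_of_ne_of_ne <;> simp [Fin.pairFst, Fin.pairSnd, Fin.ext_iff] <;> omega
      have hsnd : swap j.pairFst j.pairSnd i.pairSnd = i.pairSnd := by
        apply swap_apply_of_ne_of_ne <;> simp [Fin.pairFst, Fin.pairSnd, Fin.ext_iff] <;> omega
      simp [pairFactors, update_of_ne hij, hfst, hsnd]
  have hself : pairFactors x j = update (pairFactors x j) j (x j.pairFst * x j.pairSnd) := by
    conv_lhs => rw [← update_eq_self j (pairFactors x j)]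
    simp [pairFactors]
  simp only [← MultilinearMap.mkPiAlgebraFin_apply (R := ℤ)]
  rw [hcomm, hswap, MultilinearMap.map_update_sub, ← hself]

lemma sum_sign_smul_prod_pairFactors (x : Fin (2 * n) → R) {m : ℕ} (hm : m ≤ n) :
    ∑ σ : Perm (Fin (2 * n)), (Perm.sign σ : ℤ) • (List.ofFn (pairFactors (x ∘ σ) m)).prod =
      (2 : ℤ) ^ m • nambu x := by
  induction m with
  | zero =>
    simp only [pow_zero, one_smul, nambu]
    refine Fintype.sum_congr _ _ fun σ => ?_
    rw [list_prod_ofFn_eq_prod_pairs, pairFactors_zero]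
    rfl
  | succ m ih =>
    let j : Fin n := ⟨m, hm⟩
    have hstep : ∀ σ : Perm (Fin (2 * n)), (List.ofFn (pairFactors (x ∘ σ) (m + 1))).prod =
        (List.ofFn (pairFactors (x ∘ σ) m)).prod -
          (List.ofFn (pairFactors (x ∘ ⇑(σ * swap j.pairFst j.pairSnd)) m)).prod :=
      fun σ => prod_pairFactors_succ (x ∘ σ) j
    simp only [hstep, smul_sub, Finset.sum_sub_distrib]
    rw [Perm.sum_sign_smul_mul_swap (fun σ => (List.ofFn (pairFactors (x ∘ σ) m)).prod)
      j.pairFst_ne_pairSnd, sub_neg_eq_add, ih (by omega), pow_succ', mul_smul, two_smul]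

end PairFactors

lemma smul_nambu_eq_sum_sign_smul_prod_commutators {𝕜 A : Type*} [Field 𝕜] [CharZero 𝕜]
    [Ring A] [Algebra 𝕜 A] {n : ℕ} (z : 𝕜) (x : Fin (2 * n) → A) :
    (z ^ n / n.factorial) • nambu x = (1 / (2 ^ n * n.factorial : 𝕜)) •
      ∑ σ : Perm (Fin (2 * n)),
        (Perm.sign σ : ℤ) • (List.ofFn fun j => z • ⁅x (σ j.pairFst), x (σ j.pairSnd)⁆).prod := by
  have hprod : ∀ σ : Perm (Fin (2 * n)),
      (List.ofFn fun j => z • ⁅x (σ j.pairFst), x (σ j.pairSnd)⁆).prod =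
        z ^ n • (List.ofFn (pairFactors (x ∘ σ) n)).prod := by
    intro σ
    simpa [pairFactors_self] using
      (MultilinearMap.mkPiAlgebraFin 𝕜 n A).map_smul_univ (fun _ => z) (pairFactors (x ∘ σ) n)
  simp only [hprod, smul_comm _ (z ^ n) (List.prod _)]
  rw [← Finset.smul_sum, sum_sign_smul_prod_pairFactors x le_rfl, ← Int.cast_smul_eq_zsmul 𝕜,
    smul_smul, smul_smul]
  congr 1
  push_cast
  field_simp

section Asymptotics

variable {ι : Type*} {l : Filter ι} {H : ι → Type*} {g : ι → ℝ}

lemma isBigO_norm_sub_trans [∀ k, SeminormedAddCommGroup (H k)] {a b c : ∀ k, H k}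
    (hab : (fun k => ‖a k - b k‖) =O[l] g) (hbc : (fun k => ‖b k - c k‖) =O[l] g) :
    (fun k => ‖a k - c k‖) =O[l] g :=
  (isBigO_of_le l fun k => by
    simpa [abs_of_nonneg (add_nonneg (norm_nonneg (a k - b k)) (norm_nonneg (b k - c k)))]
      using norm_sub_le_norm_sub_add_norm_sub (a k) (b k) (c k)).trans (hab.add hbc)

lemma isBigO_norm_sum_sign_smul [∀ k, SeminormedAddCommGroup (H k)] {α : Type*} [Fintype α]
    [DecidableEq α] (x : ∀ k, Perm α → H k) (hx : ∀ σ, (fun k => ‖x k σ‖) =O[l] g) :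
    (fun k => ‖∑ σ : Perm α, (Perm.sign σ : ℤ) • x k σ‖) =O[l] g := by
  have hsign : ∀ k σ, ‖(Perm.sign σ : ℤ) • x k σ‖ = ‖x k σ‖ := fun k σ => by
    rcases Int.units_eq_one_or (Perm.sign σ) with h | h <;> simp [h]
  have hsum : (fun k => ∑ σ : Perm α, ‖x k σ‖) =O[l] g := by
    simpa only [Finset.sum_fn] using IsBigO.sum (s := Finset.univ) fun σ _ => hx σ
  refine (isBigO_of_le l fun k => ?_).trans hsum
  simpa [hsign, Real.norm_eq_abs, abs_of_nonneg (Finset.sum_nonneg fun σ _ => norm_nonneg (x k σ))]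
    using norm_sum_le Finset.univ fun σ => (Perm.sign σ : ℤ) • x k σ

variable [∀ k, NormedRing (H k)]

/- The products below are over `Fin (m + 1)`: the empty product `1 : H k` need not have norm
bounded in `k`, since a `NormedRing` may have `‖1‖ > 1`. -/

lemma isBigO_norm_mul_sub_mul (hg : g =O[l] (fun _ => (1 : ℝ))) {a b c d : ∀ k, H k}
    (hab : (fun k => ‖a k - b k‖) =O[l] g) (hcd : (fun k => ‖c k - d k‖) =O[l] g)
    (hb : (fun k => ‖b k‖) =O[l] (fun _ => (1 : ℝ)))
    (hd : (fun k => ‖d k‖) =O[l] (fun _ => (1 : ℝ))) :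
    (fun k => ‖a k * c k - b k * d k‖) =O[l] g := by
  have hsplit : ∀ k, a k * c k - b k * d k =
      (a k - b k) * (c k - d k) + (a k - b k) * d k + b k * (c k - d k) := fun k => by
    noncomm_ring
  have hbound : (fun k => ‖a k * c k - b k * d k‖) =O[l]
      fun k => ‖a k - b k‖ * ‖c k - d k‖ + ‖a k - b k‖ * ‖d k‖ + ‖b k‖ * ‖c k - d k‖ := by
    refine isBigO_of_le l fun k => ?_
    rw [hsplit, Real.norm_of_nonneg (norm_nonneg _), Real.norm_of_nonneg (by positivity)]
    refine (norm_add₃_le).trans (add_le_add_three (norm_mul_le _ _) (norm_mul_le _ _)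
      (norm_mul_le _ _))
  refine hbound.trans (IsBigO.add (IsBigO.add ?_ ?_) ?_)
  · simpa using hab.mul (hcd.trans hg)
  · simpa using hab.mul hd
  · simpa using hb.mul hcd

lemma isBigO_norm_list_prod {m : ℕ} (d : ∀ k, Fin (m + 1) → H k)
    (hd : ∀ j, (fun k => ‖d k j‖) =O[l] (fun _ => (1 : ℝ))) :
    (fun k => ‖(List.ofFn (d k)).prod‖) =O[l] (fun _ => (1 : ℝ)) := by
  induction m with
  | zero => simpa using hd 0
  | succ m ih =>
    simp only [List.ofFn_succ (n := m + 1), List.prod_cons]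
    have hprod := (hd 0).mul (ih (fun k j => d k j.succ) fun j => hd j.succ)
    simp only [mul_one] at hprod
    refine (isBigO_of_le l fun k => ?_).trans hprod
    simpa using norm_mul_le (d k 0) (List.ofFn fun j => d k j.succ).prod

lemma isBigO_norm_list_prod_sub (hg : g =O[l] (fun _ => (1 : ℝ))) {m : ℕ}
    (c d : ∀ k, Fin (m + 1) → H k) (hcd : ∀ j, (fun k => ‖c k j - d k j‖) =O[l] g)
    (hd : ∀ j, (fun k => ‖d k j‖) =O[l] (fun _ => (1 : ℝ))) :
    (fun k => ‖(List.ofFn (c k)).prod - (List.ofFn (d k)).prod‖) =O[l] g := by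
  induction m with
  | zero => simpa using hcd 0
  | succ m ih =>
    simp only [List.ofFn_succ (n := m + 1), List.prod_cons]
    exact isBigO_norm_mul_sub_mul hg (hcd 0)
      (ih (fun k j => c k j.succ) (fun k j => d k j.succ) (fun j => hcd j.succ) fun j => hd j.succ)
      (hd 0) (isBigO_norm_list_prod _ fun j => hd j.succ)

end Asymptotics

/-- Theorem `thvolform`, abstract form: for quantization maps `T k`
satisfying the Berezin–Toeplitz axioms (i) `‖ik[T_f,T_g] − T_{{f,g}}‖ = O(1/k)`,
(ii) `‖T_f‖ ≤ |f|_∞`, (iii) `‖T_{f₁}⋯T_{f_p} − T_{f₁⋯f_p}‖ = O(1/k)`, where `{·,·}` is an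
antisymmetric biderivation, and for the order-`2n` bracket
`{f₁,...,f_{2n}} = (1/(2ⁿ n!)) ∑_σ sign(σ) ∏_j {f_{σ(2j−1)}, f_{σ(2j)}}`, one has
`‖((ik)ⁿ/n!)[T_{f₁},...,T_{f_{2n}}] − T_{{f₁,...,f_{2n}}}‖ = O(1/k)` as `k → ∞`. -/
theorem stmt12 {F : Type*} [CommRing F] [Algebra ℂ F]
    (n : ℕ)
    (H : ℕ → Type*) [∀ k, NormedRing (H k)] [∀ k, NormedAlgebra ℂ (H k)]
    (T : ∀ k, F →ₗ[ℂ] H k)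
    (bracket : F →ₗ[ℂ] F →ₗ[ℂ] F) (supNorm : F → ℝ)
    (h₁ : ∀ f g : F,
      (fun k : ℕ => ‖(Complex.I * k) • (T k f * T k g - T k g * T k f) - T k (bracket f g)‖)
        =O[atTop] fun k : ℕ => (1 : ℝ) / k)
    (h₂ : ∀ (f : F) (k : ℕ), ‖T k f‖ ≤ supNorm f)
    (h₃ : ∀ (p : ℕ) (f : Fin p → F),
      (fun k : ℕ => ‖(List.ofFn fun i => T k (f i)).prod - T k (∏ i, f i)‖)
        =O[atTop] fun k : ℕ => (1 : ℝ) / k)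
    (f : Fin (2 * n) → F) :
    (fun k : ℕ =>
        ‖((Complex.I * k) ^ n / (Nat.factorial n : ℂ)) • nambu (fun i => T k (f i)) -
          T k (((1 : ℂ) / (2 ^ n * (Nat.factorial n : ℂ))) •
            ∑ σ : Equiv.Perm (Fin (2 * n)),
              (Equiv.Perm.sign σ : ℤ) •
                ∏ j : Fin n,
                  bracket (f (σ ⟨2 * j.1, by have := j.2; omega⟩))
                          (f (σ ⟨2 * j.1 + 1, by have := j.2; omega⟩)))‖)
      =O[atTop] fun k : ℕ => (1 : ℝ) / k := by
  cases n with
  | zero => simpa [nambu] using h₃ 0 Fin.elim0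
  | succ n =>
    have hg : (fun k : ℕ => (1 : ℝ) / k) =O[atTop] (fun _ => (1 : ℝ)) :=
      tendsto_one_div_atTop_nhds_zero_nat.isBigO_one ℝ
    have hbdd : ∀ g : F, (fun k => ‖T k g‖) =O[atTop] (fun _ => (1 : ℝ)) := fun g =>
      isBigO_of_le' (c := supNorm g) _ fun k => by simpa using h₂ g k
    have hterm : ∀ σ : Perm (Fin (2 * (n + 1))), (fun k : ℕ =>
        ‖(List.ofFn fun j => (Complex.I * k) • ⁅T k (f (σ j.pairFst)), T k (f (σ j.pairSnd))⁆).prod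
          - T k (∏ j : Fin (n + 1), bracket (f (σ j.pairFst)) (f (σ j.pairSnd)))‖)
          =O[atTop] fun k : ℕ => (1 : ℝ) / k := fun σ =>
      isBigO_norm_sub_trans
        (isBigO_norm_list_prod_sub hg _ _ (fun j => by simpa only [Ring.lie_def] using h₁ _ _)
          fun j => hbdd _)
        (h₃ _ _)
    refine ((isBigO_norm_sum_sign_smul _ hterm).const_mul_left
      ‖(1 / (2 ^ (n + 1) * (n + 1).factorial : ℂ))‖).congr_left fun k => ?_
    rw [smul_nambu_eq_sum_sign_smul_prod_commutators, map_smul, map_sum, ← smul_sub, norm_smul,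
      ← Finset.sum_sub_distrib]
    simp only [map_zsmul, smul_sub]
    rfl
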